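/- arXiv:1703.08589 — 5 statements merged into one kernel-verified Lean document; each statement's English description precedes it below -/
import Mathlib

section
/- Let R be an N×N Hermitian positive semi-definite matrix with eigenvalues λ₁ ≤ ... ≤ λ_N and unit-norm dominant eigenvector e_N. Let d be the unimodular vector matching the arguments of e_N (with d(i) = 1 where e_N(i) = 0). Then d^H R d ≥ λ_N + (N−1)λ₁, and consequently (d^H R d)/(max over unimodular s of s^H R s) ≥ (λ_N + (N−1)λ₁)/(λ_N N) whenever λ_N > 0. -/
/-! In the orthonormal eigenbasis, `sᴴ R s = ∑ λᵢ |eᵢᴴ s|²` is a weighted sum of eigenvalues whose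
weights add up to `‖s‖² = N` for unimodular `s`. This gives `sᴴ R s ≤ λ_N N` for every unimodular
`s`. For the phase-aligned `d`, the weight on `λ_N` is `|e_Nᴴ d|² = (∑ |e_N(i)|)² ≥ ∑ |e_N(i)|² = 1`,
and the remaining weight `N - |e_Nᴴ d|²` sits on eigenvalues `≥ λ₁`. -/

open Matrix Finset
open scoped ComplexOrder

section Spectral

variable {𝕜 n : Type*} [RCLike 𝕜] [Fintype n] [DecidableEq n]

/- `(of e)ᵀ` is the matrix whose columns are the vectors `e i`. -/
theorem transpose_of_mem_unitaryGroup {e : n → n → 𝕜}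
    (horth : ∀ i j, star (e i) ⬝ᵥ e j = if i = j then (1 : 𝕜) else 0) :
    (of e)ᵀ ∈ unitaryGroup n 𝕜 := by
  refine mem_unitaryGroup_iff'.mpr ?_
  ext i j
  simpa [mul_apply, one_apply, dotProduct] using horth i j

theorem mul_transpose_of_eq_mul_diagonal {R : Matrix n n 𝕜} {e : n → n → 𝕜} {lam : n → ℝ}
    (heig : ∀ i, R *ᵥ e i = (lam i : 𝕜) • e i) :
    R * (of e)ᵀ = (of e)ᵀ * diagonal (fun i => (lam i : 𝕜)) := by
  ext k i
  rw [mul_diagonal]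
  simpa [mul_apply, mulVec, dotProduct, mul_comm] using congrFun (heig i) k

theorem re_star_dotProduct_mulVec_eq_sum {R : Matrix n n 𝕜} {e : n → n → 𝕜} {lam : n → ℝ}
    (horth : ∀ i j, star (e i) ⬝ᵥ e j = if i = j then (1 : 𝕜) else 0)
    (heig : ∀ i, R *ᵥ e i = (lam i : 𝕜) • e i) (v : n → 𝕜) :
    RCLike.re (star v ⬝ᵥ R *ᵥ v) = ∑ i, lam i * ‖star (e i) ⬝ᵥ v‖ ^ 2 := by
  set W := (of e)ᵀ
  set c := Wᴴ *ᵥ v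
  have hc : ∀ i, c i = star (e i) ⬝ᵥ v := fun i => rfl
  have hWW : W * Wᴴ = 1 := mem_unitaryGroup_iff.mp (transpose_of_mem_unitaryGroup horth)
  have hR : R = W * diagonal (fun i => (lam i : 𝕜)) * Wᴴ := by
    rw [← mul_transpose_of_eq_mul_diagonal heig, Matrix.mul_assoc, hWW, Matrix.mul_one]
  have hstar : star c = star v ᵥ* W := by rw [star_mulVec, conjTranspose_conjTranspose]
  calc RCLike.re (star v ⬝ᵥ R *ᵥ v)
      = RCLike.re (star c ⬝ᵥ diagonal (fun i => (lam i : 𝕜)) *ᵥ c) := by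
        rw [hR, hstar, ← mulVec_mulVec, ← mulVec_mulVec, dotProduct_mulVec]
    _ = ∑ i, lam i * ‖star (e i) ⬝ᵥ v‖ ^ 2 := by
        simp_rw [← hc, dotProduct, mulVec_diagonal, Pi.star_apply, RCLike.star_def,
          mul_left_comm _ (lam _ : 𝕜), RCLike.conj_mul, map_sum]
        norm_cast

theorem sum_norm_sq_dotProduct_eq {e : n → n → 𝕜}
    (horth : ∀ i j, star (e i) ⬝ᵥ e j = if i = j then (1 : 𝕜) else 0) (v : n → 𝕜) :
    ∑ i, ‖star (e i) ⬝ᵥ v‖ ^ 2 = RCLike.re (star v ⬝ᵥ v) := by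
  simpa using (re_star_dotProduct_mulVec_eq_sum (R := 1) (lam := fun _ => 1) horth
    (fun i => by simp) v).symm

end Spectral

theorem RCLike.re_star_dotProduct_self {𝕜 n : Type*} [RCLike 𝕜] [Fintype n] (v : n → 𝕜) :
    RCLike.re (star v ⬝ᵥ v) = ∑ i, ‖v i‖ ^ 2 := by
  simp_rw [dotProduct, Pi.star_apply, RCLike.star_def, RCLike.conj_mul, map_sum]
  norm_cast

theorem Matrix.PosSemidef.nonneg_of_mulVec_eq_smul {𝕜 n : Type*} [RCLike 𝕜] [Fintype n]
    {R : Matrix n n 𝕜} (hR : R.PosSemidef) {x : n → 𝕜} {μ : ℝ}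
    (hx : star x ⬝ᵥ x = 1) (h : R *ᵥ x = (μ : 𝕜) • x) : 0 ≤ μ := by
  have := hR.dotProduct_mulVec_nonneg x
  rwa [h, dotProduct_smul, hx, smul_eq_mul, mul_one, RCLike.ofReal_nonneg] at this

section PhaseAlign

variable {𝕜 n : Type*} [RCLike 𝕜]

def phaseAlign (x : n → 𝕜) : n → 𝕜 := fun i => if x i = 0 then 1 else x i / (‖x i‖ : 𝕜)

theorem norm_phaseAlign (x : n → 𝕜) (i : n) : ‖phaseAlign x i‖ = 1 := by
  by_cases hx : x i = 0 <;> simp [phaseAlign, hx]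

theorem star_dotProduct_phaseAlign [Fintype n] (x : n → 𝕜) :
    star x ⬝ᵥ phaseAlign x = ((∑ i, ‖x i‖ : ℝ) : 𝕜) := by
  rw [RCLike.ofReal_sum]
  refine sum_congr rfl fun i _ => ?_
  by_cases hx : x i = 0
  · simp [phaseAlign, hx]
  · have : (‖x i‖ : 𝕜) ≠ 0 := by simpa using hx
    rw [phaseAlign, if_neg hx, Pi.star_apply, RCLike.star_def, mul_div_assoc', RCLike.conj_mul]
    field_simp

theorem one_le_norm_sq_star_dotProduct_phaseAlign [Fintype n] {x : n → 𝕜}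
    (hx : star x ⬝ᵥ x = 1) :
    1 ≤ ‖star x ⬝ᵥ phaseAlign x‖ ^ 2 := by
  rw [star_dotProduct_phaseAlign, RCLike.norm_ofReal,
    abs_of_nonneg (sum_nonneg fun i _ => norm_nonneg (x i))]
  calc (1 : ℝ) = ∑ i, ‖x i‖ ^ 2 := by
        rw [← RCLike.re_star_dotProduct_self, hx, RCLike.one_re]
    _ ≤ (∑ i, ‖x i‖) ^ 2 := sum_sq_le_sq_sum_of_nonneg fun i _ => norm_nonneg (x i)

end PhaseAlign

theorem le_sum_mul_of_one_le_weight {ι : Type*} [Fintype ι] {lam w : ι → ℝ} {m : ℝ} {j : ι}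
    (hm : ∀ i, m ≤ lam i) (hw : ∀ i, 0 ≤ w i) (hj : 1 ≤ w j) :
    lam j + (∑ i, w i - 1) * m ≤ ∑ i, lam i * w i := by
  have hexcess : (lam j - m) * w j ≤ ∑ i, (lam i - m) * w i :=
    single_le_sum (fun i _ => mul_nonneg (sub_nonneg.2 (hm i)) (hw i)) (mem_univ j)
  have hsplit : ∑ i, (lam i - m) * w i = ∑ i, lam i * w i - m * ∑ i, w i := by
    rw [mul_sum, ← sum_sub_distrib]
    exact sum_congr rfl fun i _ => by ring
  nlinarith [mul_le_mul_of_nonneg_left hj (sub_nonneg.2 (hm j))]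

theorem stmt_3_general (N : ℕ) (hN : 0 < N) (R : Matrix (Fin N) (Fin N) ℂ)
    (hpsd : R.PosSemidef)
    (e : Fin N → Fin N → ℂ) (lam : Fin N → ℝ)
    (horth : ∀ i j, star (e i) ⬝ᵥ e j = if i = j then (1 : ℂ) else 0)
    (heig : ∀ i, R *ᵥ e i = (lam i : ℂ) • e i)
    (hmono : Monotone lam)
    (eN : Fin N → ℂ) (heN : eN = e ⟨N - 1, Nat.sub_lt hN one_pos⟩)
    (d : Fin N → ℂ)
    (hd : ∀ i, d i = if eN i = 0 then 1 else eN i / (‖eN i‖ : ℂ))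
    (o : Fin N → ℂ) (ho : o ∈ {s : Fin N → ℂ | ∀ i, ‖s i‖ = 1})
    (hopt : IsMaxOn (fun s : Fin N → ℂ => (star s ⬝ᵥ R *ᵥ s).re)
      {s : Fin N → ℂ | ∀ i, ‖s i‖ = 1} o) :
    lam ⟨N - 1, Nat.sub_lt hN one_pos⟩ + (N - 1) * lam ⟨0, hN⟩ ≤ (star d ⬝ᵥ R *ᵥ d).re ∧
    (0 < lam ⟨N - 1, Nat.sub_lt hN one_pos⟩ →
      (lam ⟨N - 1, Nat.sub_lt hN one_pos⟩ + (N - 1) * lam ⟨0, hN⟩) /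
          (lam ⟨N - 1, Nat.sub_lt hN one_pos⟩ * N) ≤
        (star d ⬝ᵥ R *ᵥ d).re / (star o ⬝ᵥ R *ᵥ o).re) := by
  set M : Fin N := ⟨N - 1, Nat.sub_lt hN one_pos⟩
  have hd_eq : d = phaseAlign eN := funext hd
  have hquad := re_star_dotProduct_mulVec_eq_sum horth heig
  have hweight : ∀ s ∈ {s : Fin N → ℂ | ∀ i, ‖s i‖ = 1}, ∑ i, ‖star (e i) ⬝ᵥ s‖ ^ 2 = N := by
    intro s (hs : ∀ i, ‖s i‖ = 1)
    simp [sum_norm_sq_dotProduct_eq horth, RCLike.re_star_dotProduct_self, hs]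
  have hdu : d ∈ {s : Fin N → ℂ | ∀ i, ‖s i‖ = 1} := hd_eq ▸ norm_phaseAlign eN
  have hdM : 1 ≤ ‖star (e M) ⬝ᵥ d‖ ^ 2 := by
    rw [hd_eq, ← heN]
    exact one_le_norm_sq_star_dotProduct_phaseAlign (by simpa [← heN] using horth M M)
  have hlower : lam M + (N - 1) * lam ⟨0, hN⟩ ≤ (star d ⬝ᵥ R *ᵥ d).re := by
    rw [← RCLike.re_to_complex, hquad, ← hweight d hdu]
    exact le_sum_mul_of_one_le_weight (fun i => hmono (Nat.zero_le i.val))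
      (fun i => sq_nonneg _) hdM
  have hupper : (star o ⬝ᵥ R *ᵥ o).re ≤ lam M * N := by
    rw [← RCLike.re_to_complex, hquad, ← hweight o ho, mul_sum]
    gcongr with i
    exact hmono (Nat.le_sub_one_of_lt i.isLt)
  refine ⟨hlower, fun hM => ?_⟩
  have hlam0 : 0 ≤ lam ⟨0, hN⟩ :=
    hpsd.nonneg_of_mulVec_eq_smul (by simpa using horth ⟨0, hN⟩ ⟨0, hN⟩) (heig _)
  have hpos : 0 < lam M + (N - 1) * lam ⟨0, hN⟩ := by
    have : (1 : ℝ) ≤ N := by exact_mod_cast hN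
    nlinarith
  exact div_le_div₀ (hpos.le.trans hlower) hlower (hpos.trans_le (hlower.trans (hopt hdu))) hupper

/-- Performance bound for the dominant-eigenvector-matching heuristic: if `R` is Hermitian
positive semidefinite with orthonormal eigenbasis `e` and nondecreasing eigenvalues `lam`,
and `d` is the unimodular vector matching the arguments of the dominant eigenvector, then
`dᴴ R d ≥ lam_N + (N-1) lam_1`, and relative to the optimal unimodular value the ratio is
at least `(lam_N + (N-1) lam_1) / (lam_N N)` when `lam_N > 0`. -/
theorem stmt_3 (N : ℕ) (hN : 0 < N) (R : Matrix (Fin N) (Fin N) ℂ)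
    (hR : R.IsHermitian) (hpsd : R.PosSemidef)
    (e : Fin N → Fin N → ℂ) (lam : Fin N → ℝ)
    (horth : ∀ i j, star (e i) ⬝ᵥ e j = if i = j then (1 : ℂ) else 0)
    (heig : ∀ i, R *ᵥ e i = (lam i : ℂ) • e i)
    (hmono : Monotone lam)
    (eN : Fin N → ℂ) (heN : eN = e ⟨N - 1, Nat.sub_lt hN one_pos⟩)
    (d : Fin N → ℂ)
    (hd : ∀ i, d i = if eN i = 0 then 1 else eN i / (‖eN i‖ : ℂ))
    (o : Fin N → ℂ) (ho : o ∈ {s : Fin N → ℂ | ∀ i, ‖s i‖ = 1})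
    (hopt : IsMaxOn (fun s : Fin N → ℂ => (star s ⬝ᵥ R *ᵥ s).re)
      {s : Fin N → ℂ | ∀ i, ‖s i‖ = 1} o) :
    lam ⟨N - 1, Nat.sub_lt hN one_pos⟩ + (N - 1) * lam ⟨0, hN⟩ ≤ (star d ⬝ᵥ R *ᵥ d).re ∧
    (0 < lam ⟨N - 1, Nat.sub_lt hN one_pos⟩ →
      (lam ⟨N - 1, Nat.sub_lt hN one_pos⟩ + (N - 1) * lam ⟨0, hN⟩) /
          (lam ⟨N - 1, Nat.sub_lt hN one_pos⟩ * N) ≤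
        (star d ⬝ᵥ R *ᵥ d).re / (star o ⬝ᵥ R *ᵥ o).re) :=
  stmt_3_general N hN R hpsd e lam horth heig hmono eN heN d hd o ho hopt
end

section
/- Let R be an N×N Hermitian matrix with entries r_{ij}, and define δ₁ = 0 and δ_k = Σ_{i=1}^{k−1} |r_{ki}| for k = 2,...,N. Define a_k = 2δ_k + 4Σ_{i=1}^{N−k} δ_{k+i} for k < N and a_N = 2δ_N, and let R̄ be R with its diagonal replaced by (a₁,...,a_N). Then for any unimodular strings B = (b₁,...,b_k) and A = (b₁,...,b_k,...,b_l) with k ≤ l ≤ N (B a prefix of A), the difference F(A) − F(B) satisfies 4Σ_{i=k+1}^{l} Σ_{j=1}^{N−i} δ_{i+j} ≤ F(A) − F(B) ≤ 4Σ_{i=k+1}^{l} (δ_i + Σ_{j=1}^{N−i} δ_{i+j}), where F(C) = C^H R̄_m C for a string C of length m and R̄_m is the leading m×m principal submatrix of R̄. -/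
open Matrix

/-- `delta R k = Σ_{i<k} |r_{k i}|` (so `delta R 0 = 0`). -/
noncomputable def delta {N : ℕ} (R : Matrix (Fin N) (Fin N) ℂ) (k : Fin N) : ℝ :=
  ∑ i ∈ Finset.Iio k, ‖R k i‖

/-- The modified diagonal entries `a_k = 2 δ_k + 4 Σ_{j>k} δ_j` (for the last index the
second sum is empty, giving `a_N = 2 δ_N`). -/
noncomputable def adiag {N : ℕ} (R : Matrix (Fin N) (Fin N) ℂ) (k : Fin N) : ℝ :=
  2 * delta R k + 4 * ∑ j ∈ Finset.Ioi k, delta R j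

/-- `R̄`: same off-diagonal entries as `R`, with diagonal replaced by `a`. -/
noncomputable def Rbar {N : ℕ} (R : Matrix (Fin N) (Fin N) ℂ) : Matrix (Fin N) (Fin N) ℂ :=
  fun i j => if i = j then (adiag R i : ℂ) else R i j

/-- `F m b = Cᴴ R̄_m C` where `C` is the prefix of length `m` of the string `b` and
`R̄_m` is the leading `m × m` principal submatrix of `R̄`. -/
noncomputable def Fval {N : ℕ} (R : Matrix (Fin N) (Fin N) ℂ) (m : ℕ) (hm : m ≤ N)
    (b : Fin N → ℂ) : ℝ :=
  (star (fun i : Fin m => b (Fin.castLE hm i)) ⬝ᵥ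
      ((Rbar R).submatrix (Fin.castLE hm) (Fin.castLE hm)) *ᵥ
        fun i : Fin m => b (Fin.castLE hm i)).re

/-!
Appending the entry `b_p` to a string changes `F` by `a_p |b_p|² + 2 Re (conj b_p Σ_{i<p} r_{pi} b_i)`.
For a unimodular string the cross term has modulus at most `δ_p`, so the increment lies between
`a_p - 2δ_p = 4 Σ_{q>p} δ_q` and `a_p + 2δ_p`; summing the increments for `p = k, …, l-1`
telescopes to `F(A) - F(B)`.
-/

open Finset ComplexConjugate

lemma re_conj_mul_mul_self (x d : ℂ) : (conj x * d * x).re = d.re * ‖x‖ ^ 2 := by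
  rw [mul_right_comm, ← Complex.normSq_eq_conj_mul_self, Complex.re_ofReal_mul,
    Complex.normSq_eq_norm_sq, mul_comm]

lemma re_sum_insert_sum_insert {ι : Type*} [DecidableEq ι] {A : Matrix ι ι ℂ}
    (hA : A.IsHermitian) (v : ι → ℂ) {s : Finset ι} {a : ι} (ha : a ∉ s) :
    (∑ i ∈ insert a s, ∑ j ∈ insert a s, star (v i) * A i j * v j).re =
      (∑ i ∈ s, ∑ j ∈ s, star (v i) * A i j * v j).re + (A a a).re * ‖v a‖ ^ 2 +
        2 * (∑ j ∈ s, star (v a) * A a j * v j).re := by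
  have hcross :
      ∑ i ∈ s, star (v i) * A i a * v a = star (∑ j ∈ s, star (v a) * A a j * v j) := by
    simp only [star_sum, star_mul, star_star, ← hA.apply a]
    exact sum_congr rfl fun i _ => by ring
  simp only [sum_insert ha, sum_add_distrib]
  rw [hcross]
  simp only [Complex.add_re, Complex.star_def, Complex.conj_re, re_conj_mul_mul_self]
  ring

lemma filter_val_lt_eq_map_castLEEmb {N m : ℕ} (hm : m ≤ N) :
    univ.filter (fun i : Fin N => (i : ℕ) < m) = univ.map (Fin.castLEEmb hm) := by
  ext i
  simp only [mem_filter, mem_univ, true_and, mem_map, Fin.coe_castLEEmb]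
  exact ⟨fun h => ⟨⟨i, h⟩, rfl⟩, by rintro ⟨j, rfl⟩; exact j.2⟩

lemma filter_val_lt_val_eq_Iio {N : ℕ} (p : Fin N) :
    univ.filter (fun i : Fin N => (i : ℕ) < p) = Iio p := by
  ext i; simp

lemma filter_val_lt_val_succ_eq_insert_Iio {N : ℕ} (p : Fin N) :
    univ.filter (fun i : Fin N => (i : ℕ) < p + 1) = insert p (Iio p) := by
  ext i
  simp only [mem_filter, mem_univ, true_and, mem_insert, mem_Iio, Fin.ext_iff, Fin.lt_def]
  omega

lemma filter_val_mem_Ico_succ {N k l : ℕ} (hkl : k ≤ l) (hl : l < N) :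
    univ.filter (fun p : Fin N => k ≤ (p : ℕ) ∧ (p : ℕ) < l + 1) =
      insert ⟨l, hl⟩ (univ.filter (fun p : Fin N => k ≤ (p : ℕ) ∧ (p : ℕ) < l)) := by
  ext p
  simp only [mem_filter, mem_univ, true_and, mem_insert, Fin.ext_iff]
  omega

lemma sum_val_mem_Ico_succ_sub {N k l : ℕ} (hkl : k ≤ l) (hl : l ≤ N) (F : ∀ m, m ≤ N → ℝ) :
    ∑ p ∈ univ.filter (fun p : Fin N => k ≤ (p : ℕ) ∧ (p : ℕ) < l),
        (F (p + 1) p.2 - F p p.2.le) = F l hl - F k (hkl.trans hl) := by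
  induction l, hkl using Nat.le_induction with
  | base =>
    rw [filter_false_of_mem fun (p : Fin N) _ => show ¬(k ≤ (p : ℕ) ∧ (p : ℕ) < k) by omega,
      sum_empty, sub_self]
  | succ l hkl ih =>
    rw [filter_val_mem_Ico_succ hkl hl, sum_insert (by simp), ih (Nat.le_of_succ_le hl)]
    ring

lemma isHermitian_Rbar {N : ℕ} {R : Matrix (Fin N) (Fin N) ℂ} (hR : R.IsHermitian) :
    (Rbar R).IsHermitian := by
  ext i j
  by_cases hij : i = j
  · subst hij; simp [Rbar]
  · simp [Rbar, hij, Ne.symm hij, hR.apply]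

lemma Fval_eq_re_sum {N : ℕ} (R : Matrix (Fin N) (Fin N) ℂ) (m : ℕ) (hm : m ≤ N)
    (b : Fin N → ℂ) :
    Fval R m hm b = (∑ i ∈ univ.filter (fun i : Fin N => (i : ℕ) < m),
      ∑ j ∈ univ.filter (fun j : Fin N => (j : ℕ) < m), star (b i) * Rbar R i j * b j).re := by
  simp only [filter_val_lt_eq_map_castLEEmb hm, sum_map, Fval, dotProduct, mulVec, mul_sum,
    Pi.star_apply, submatrix_apply, Fin.coe_castLEEmb, mul_assoc]

lemma Fval_succ_sub {N : ℕ} {R : Matrix (Fin N) (Fin N) ℂ} (hR : R.IsHermitian) (p : Fin N)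
    (b : Fin N → ℂ) :
    Fval R (p + 1) p.2 b - Fval R p p.2.le b =
      adiag R p * ‖b p‖ ^ 2 + 2 * (∑ i ∈ Iio p, star (b p) * R p i * b i).re := by
  have hdiag : Rbar R p p = adiag R p := if_pos rfl
  have hrow : ∑ i ∈ Iio p, star (b p) * Rbar R p i * b i =
      ∑ i ∈ Iio p, star (b p) * R p i * b i :=
    sum_congr rfl fun i hi => by rw [Rbar, if_neg (ne_of_gt (mem_Iio.mp hi))]
  rw [Fval_eq_re_sum, Fval_eq_re_sum, filter_val_lt_val_succ_eq_insert_Iio,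
    filter_val_lt_val_eq_Iio, re_sum_insert_sum_insert (isHermitian_Rbar hR) b (by simp),
    hrow, hdiag, Complex.ofReal_re]
  ring

lemma abs_re_sum_le_delta {N : ℕ} (R : Matrix (Fin N) (Fin N) ℂ) (p : Fin N) {b : Fin N → ℂ}
    (hb : ∀ i ≤ p, ‖b i‖ = 1) :
    |(∑ i ∈ Iio p, star (b p) * R p i * b i).re| ≤ delta R p := calc
  _ ≤ ‖∑ i ∈ Iio p, star (b p) * R p i * b i‖ := Complex.abs_re_le_norm _
  _ ≤ ∑ i ∈ Iio p, ‖star (b p) * R p i * b i‖ := norm_sum_le _ _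
  _ = delta R p := sum_congr rfl fun i hi => by
    rw [norm_mul, norm_mul, norm_star, hb p le_rfl, hb i (mem_Iio.mp hi).le, one_mul, mul_one]

lemma Fval_succ_sub_mem_Icc {N : ℕ} {R : Matrix (Fin N) (Fin N) ℂ} (hR : R.IsHermitian)
    (p : Fin N) {b : Fin N → ℂ} (hb : ∀ i ≤ p, ‖b i‖ = 1) :
    Fval R (p + 1) p.2 b - Fval R p p.2.le b ∈
      Set.Icc (4 * ∑ q ∈ Ioi p, delta R q) (4 * (delta R p + ∑ q ∈ Ioi p, delta R q)) := by
  rw [Fval_succ_sub hR, hb p le_rfl, one_pow, mul_one, adiag]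
  have := abs_le.mp (abs_re_sum_le_delta R p hb)
  constructor <;> linarith

/-- Bounds on the increment `F(A) − F(B)` for a unimodular string `A` of length `l`
extending its prefix `B` of length `k`. -/
theorem stmt_5 (N : ℕ) (R : Matrix (Fin N) (Fin N) ℂ) (hR : R.IsHermitian)
    (k l : ℕ) (hkl : k ≤ l) (hl : l ≤ N)
    (b : Fin N → ℂ) (hb : ∀ i : Fin N, (i : ℕ) < l → ‖b i‖ = 1) :
    4 * ∑ p ∈ Finset.univ.filter (fun p : Fin N => k ≤ (p : ℕ) ∧ (p : ℕ) < l),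
        ∑ q ∈ Finset.Ioi p, delta R q ≤
      Fval R l hl b - Fval R k (hkl.trans hl) b ∧
    Fval R l hl b - Fval R k (hkl.trans hl) b ≤
      4 * ∑ p ∈ Finset.univ.filter (fun p : Fin N => k ≤ (p : ℕ) ∧ (p : ℕ) < l),
        (delta R p + ∑ q ∈ Finset.Ioi p, delta R q) := by
  have hstep : ∀ p ∈ univ.filter (fun p : Fin N => k ≤ (p : ℕ) ∧ (p : ℕ) < l),
      Fval R (p + 1) p.2 b - Fval R p p.2.le b ∈
        Set.Icc (4 * ∑ q ∈ Ioi p, delta R q) (4 * (delta R p + ∑ q ∈ Ioi p, delta R q)) :=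
    fun p hp => Fval_succ_sub_mem_Icc hR p fun i hi =>
      hb i (lt_of_le_of_lt (Fin.le_def.mp hi) (mem_filter.mp hp).2.2)
  rw [← sum_val_mem_Ico_succ_sub hkl hl (fun m hm => Fval R m hm b), mul_sum, mul_sum]
  exact ⟨sum_le_sum fun p hp => (hstep p hp).1, sum_le_sum fun p hp => (hstep p hp).2⟩
end

section
/- With R, δ_k, and R̄ defined as in the trace-modification construction, the function F(A) = A^H R̄_{|A|} A on unimodular strings of length at most N is forward monotone: if B is a prefix of A (both unimodular strings of length ≤ N), then F(B) ≤ F(A). -/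
open Matrix

/-! Appending the coordinate `b_m` to the string changes `F` by
`a_m |b_m|² + 2 Re Σ_{i<m} conj(b_m) r_{mi} b_i` (Hermitian symmetry pairs the new row with
the new column). For unimodular entries the sum is at least `-2 δ_m`, and `a_m ≥ 2 δ_m`
because the rest of `a_m` is a sum of nonnegative `δ_j`; so `F` grows one coordinate at a
time. -/

theorem star_dotProduct_mulVec_succ {α : Type*} [NonUnitalNonAssocSemiring α] [Star α] {m : ℕ}
    (A : Matrix (Fin (m + 1)) (Fin (m + 1)) α)
    (v : Fin (m + 1) → α) :
    star v ⬝ᵥ A *ᵥ v =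
      star (Fin.init v) ⬝ᵥ A.submatrix Fin.castSucc Fin.castSucc *ᵥ Fin.init v +
        ((∑ i : Fin m, (star (v i.castSucc) * (A i.castSucc (Fin.last m) * v (Fin.last m)) +
          star (v (Fin.last m)) * (A (Fin.last m) i.castSucc * v i.castSucc))) +
        star (v (Fin.last m)) * (A (Fin.last m) (Fin.last m) * v (Fin.last m))) := by
  simp only [dotProduct, mulVec, Fin.sum_univ_castSucc, mul_add, Finset.sum_add_distrib,
    Finset.mul_sum, Pi.star_apply, Fin.init, submatrix_apply]
  abel

theorem neg_two_mul_norm_le_re_star_add (c : ℂ) : -(2 * ‖c‖) ≤ (star c + c).re := by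
  have := neg_le_of_abs_le (Complex.abs_re_le_norm c)
  simp only [Complex.add_re, Complex.star_def, Complex.conj_re]
  linarith

section Rbar

variable {N : ℕ} (R : Matrix (Fin N) (Fin N) ℂ)

theorem delta_nonneg (k : Fin N) : 0 ≤ delta R k :=
  Finset.sum_nonneg fun _ _ => norm_nonneg _

theorem two_mul_delta_le_adiag (k : Fin N) : 2 * delta R k ≤ adiag R k := by
  have : 0 ≤ ∑ j ∈ Finset.Ioi k, delta R j := Finset.sum_nonneg fun j _ => delta_nonneg R j
  rw [adiag]
  linarith

theorem Rbar_apply_self (i : Fin N) : Rbar R i i = adiag R i := if_pos rfl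

theorem Rbar_apply_of_ne {i j : Fin N} (h : i ≠ j) : Rbar R i j = R i j := if_neg h

theorem delta_castLE_last {m : ℕ} (hm : m + 1 ≤ N) :
    delta R (Fin.castLE hm (Fin.last m)) =
      ∑ i : Fin m, ‖R (Fin.castLE hm (Fin.last m)) (Fin.castLE hm i.castSucc)‖ := by
  rw [delta, ← Fin.map_castLEEmb_Iio, Finset.sum_map, Fin.Iio_last_eq_map, Finset.sum_map]
  rfl

end Rbar

theorem Fval_le_Fval_succ {N : ℕ} (R : Matrix (Fin N) (Fin N) ℂ) (hR : R.IsHermitian) {m : ℕ}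
    (hm : m + 1 ≤ N) (b : Fin N → ℂ) (hb : ∀ i : Fin N, (i : ℕ) ≤ m → ‖b i‖ = 1) :
    Fval R m (Nat.le_of_succ_le hm) b ≤ Fval R (m + 1) hm b := by
  unfold Fval
  rw [star_dotProduct_mulVec_succ, Complex.add_re]
  refine le_add_of_nonneg_right ?_
  simp only [submatrix_apply, Complex.add_re, Complex.re_sum]
  set M := Fin.castLE hm (Fin.last m)
  have hbM : ‖b M‖ = 1 := hb M le_rfl
  have diag : (star (b M) * (Rbar R M M * b M)).re = adiag R M := by
    rw [Rbar_apply_self, mul_left_comm, Complex.star_def, Complex.conj_mul', hbM]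
    simp
  have cross (i : Fin m) : -(2 * ‖R M (Fin.castLE hm i.castSucc)‖) ≤
      (star (b (Fin.castLE hm i.castSucc)) * (Rbar R (Fin.castLE hm i.castSucc) M * b M)).re +
        (star (b M) * (Rbar R M (Fin.castLE hm i.castSucc) * b (Fin.castLE hm i.castSucc))).re := by
    set x := Fin.castLE hm i.castSucc
    have hx : x ≠ M := Fin.ne_of_lt i.castSucc_lt_last
    set c := star (b M) * (R M x * b x)
    have hc : ‖c‖ = ‖R M x‖ := by
      rw [norm_mul, norm_mul, norm_star, hbM, hb x i.is_lt.le]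
      ring
    rw [Rbar_apply_of_ne R hx, Rbar_apply_of_ne R hx.symm, ← hR.apply x M, ← hc,
      ← Complex.add_re]
    convert neg_two_mul_norm_le_re_star_add c using 3
    simp only [c, star_mul', star_star]
    ring
  calc 0 ≤ -(2 * delta R M) + adiag R M := by linarith [two_mul_delta_le_adiag R M]
    _ ≤ _ := by
      rw [delta_castLE_last, Finset.mul_sum, ← Finset.sum_neg_distrib, diag]
      gcongr with i
      exact cross i

/-- Forward monotonicity of `F`: if `B` is a prefix of the unimodular string `A`, then
`F(B) ≤ F(A)`. -/
theorem stmt_6 (N : ℕ) (R : Matrix (Fin N) (Fin N) ℂ) (hR : R.IsHermitian)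
    (k l : ℕ) (hkl : k ≤ l) (hl : l ≤ N)
    (b : Fin N → ℂ) (hb : ∀ i : Fin N, (i : ℕ) < l → ‖b i‖ = 1) :
    Fval R k (hkl.trans hl) b ≤ Fval R l hl b := by
  induction l, hkl using Nat.le_induction with
  | base => exact le_rfl
  | succ n _ ih =>
    exact (ih (Nat.le_of_succ_le hl) fun i hi => hb i (Nat.lt_succ_of_lt hi)).trans
      (Fval_le_Fval_succ R hR hl b fun i hi => hb i (Nat.lt_succ_of_le hi))
end

section
/- Suppose g, o are unimodular vectors in ℂ^N, R is Hermitian, R̄ agrees with R off the diagonal, o maximizes s ↦ s^H R s over unimodular vectors, and g^H R̄ g ≥ (1 − 1/e)(o^H R̄ o). If Tr(R̄) ≤ Tr(R) and o^H R o ≥ 0, then g^H R g ≥ (1 − 1/e)(o^H R o). -/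
open Matrix

section UnimodularQuadraticForm

variable {ι α : Type*} [DecidableEq ι]

theorem Matrix.sub_eq_diagonal_diag_of_offDiag_eq [AddGroup α] {A B : Matrix ι ι α}
    (hoff : ∀ i j, i ≠ j → A i j = B i j) : A - B = diagonal (A - B).diag := by
  ext i j
  rcases eq_or_ne i j with rfl | hij
  · simp
  · simp [diagonal_apply_ne _ hij, hoff i j hij]

theorem Matrix.star_dotProduct_diagonal_mulVec_of_unimodular
    [Fintype ι] [CommSemiring α] [StarRing α]
    (d s : ι → α) (hs : ∀ i, star (s i) * s i = 1) :
    star s ⬝ᵥ diagonal d *ᵥ s = ∑ i, d i := by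
  refine Finset.sum_congr rfl fun i _ => ?_
  rw [Pi.star_apply, mulVec_diagonal, mul_left_comm, hs i, mul_one]

theorem Matrix.star_dotProduct_mulVec_eq_add_trace_sub [Fintype ι] [CommRing α] [StarRing α]
    {A B : Matrix ι ι α} (hoff : ∀ i j, i ≠ j → A i j = B i j)
    (s : ι → α) (hs : ∀ i, star (s i) * s i = 1) :
    star s ⬝ᵥ A *ᵥ s = star s ⬝ᵥ B *ᵥ s + (trace A - trace B) := by
  have hdiff : star s ⬝ᵥ (A - B) *ᵥ s = trace (A - B) := by
    conv_lhs => rw [sub_eq_diagonal_diag_of_offDiag_eq hoff]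
    exact star_dotProduct_diagonal_mulVec_of_unimodular _ _ hs
  rw [sub_mulVec, dotProduct_sub, trace_sub] at hdiff
  rw [← hdiff, add_sub_cancel]

end UnimodularQuadraticForm

theorem Complex.star_mul_self_of_norm_eq_one {z : ℂ} (hz : ‖z‖ = 1) : star z * z = 1 := by
  rw [Complex.star_def, Complex.conj_mul', hz]
  norm_num

theorem stmt_10_general (N : ℕ) (R Rb : Matrix (Fin N) (Fin N) ℂ)
    (hoff : ∀ i j, i ≠ j → Rb i j = R i j)
    (g o : Fin N → ℂ)
    (hg : ∀ i, ‖g i‖ = 1) (ho : ∀ i, ‖o i‖ = 1)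
    (hguar : (1 - 1 / Real.exp 1) * (star o ⬝ᵥ Rb *ᵥ o).re ≤ (star g ⬝ᵥ Rb *ᵥ g).re)
    (htr : (Matrix.trace Rb).re ≤ (Matrix.trace R).re) :
    (1 - 1 / Real.exp 1) * (star o ⬝ᵥ R *ᵥ o).re ≤ (star g ⬝ᵥ R *ᵥ g).re := by
  have hshift (s : Fin N → ℂ) (hs : ∀ i, ‖s i‖ = 1) :
      (star s ⬝ᵥ Rb *ᵥ s).re = (star s ⬝ᵥ R *ᵥ s).re + ((trace Rb).re - (trace R).re) := by
    rw [star_dotProduct_mulVec_eq_add_trace_sub hoff s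
      fun i => Complex.star_mul_self_of_norm_eq_one (hs i)]
    simp
  rw [hshift g hg, hshift o ho] at hguar
  have he : 0 < 1 / Real.exp 1 := by positivity
  -- after the shift, `gᴴ R g ≥ (1 - 1/e) oᴴ R o + (1/e) (Tr R - Tr R̄)`
  nlinarith

/-- If `g` achieves a `(1 − 1/e)` guarantee for the modified quadratic form `sᴴ R̄ s`,
`o` is optimal for `sᴴ R s` over unimodular vectors with `oᴴ R o ≥ 0`, and
`Tr(R̄) ≤ Tr(R)`, then `g` achieves a `(1 − 1/e)` guarantee for the original form. -/
theorem stmt_10 (N : ℕ) (R Rb : Matrix (Fin N) (Fin N) ℂ)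
    (hR : R.IsHermitian) (hRb : Rb.IsHermitian)
    (hoff : ∀ i j, i ≠ j → Rb i j = R i j)
    (g o : Fin N → ℂ)
    (hg : ∀ i, ‖g i‖ = 1) (ho : ∀ i, ‖o i‖ = 1)
    (hopt : IsMaxOn (fun s : Fin N → ℂ => (star s ⬝ᵥ R *ᵥ s).re)
      {s : Fin N → ℂ | ∀ i, ‖s i‖ = 1} o)
    (hguar : (1 - 1 / Real.exp 1) * (star o ⬝ᵥ Rb *ᵥ o).re ≤ (star g ⬝ᵥ Rb *ᵥ g).re)
    (htr : (Matrix.trace Rb).re ≤ (Matrix.trace R).re)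
    (hnn : 0 ≤ (star o ⬝ᵥ R *ᵥ o).re) :
    (1 - 1 / Real.exp 1) * (star o ⬝ᵥ R *ᵥ o).re ≤ (star g ⬝ᵥ R *ᵥ g).re :=
  stmt_10_general N R Rb hoff g o hg ho hguar htr
end

section
/- If an N×N Hermitian matrix R is 2N-dominant, then for every unimodular vector s and the optimal unimodular vector o maximizing the quadratic form, s^H R s ≥ ((2N−1)/(2N+1))·(o^H R o). -/
open Matrix Finset

/-!
On a unimodular vector `v` the diagonal of `R` contributes exactly `Tr R` to `vᴴ R v`, and each
off-diagonal term has modulus `|r_{ij}|`, so `vᴴ R v` lies within `E = Σ_{i ≠ j} |r_{ij}|` of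
`Tr R`. Dominance gives `2N·E ≤ Tr R`, and then
`(2N-1)/(2N+1) · (Tr R + E) ≤ Tr R - E` bounds the value at `o` against the value at `s`.
-/

section UnimodularQuadraticForm

variable {𝕜 ι : Type*} [RCLike 𝕜] [Fintype ι] [DecidableEq ι]

def offDiagNormSum (R : Matrix ι ι 𝕜) : ℝ :=
  ∑ i, ∑ j ∈ univ.erase i, ‖R i j‖

theorem star_dotProduct_mulVec_sub_trace {R : Matrix ι ι 𝕜} {v : ι → 𝕜} (hv : ∀ i, ‖v i‖ = 1) :
    star v ⬝ᵥ R *ᵥ v - R.trace = ∑ i, ∑ j ∈ univ.erase i, star (v i) * R i j * v j := by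
  have hdiag : ∀ i, star (v i) * R i i * v i = R i i := fun i => by
    rw [mul_right_comm, RCLike.star_def, RCLike.conj_mul, hv i]
    simp
  simp only [dotProduct, mulVec, Pi.star_apply, mul_sum, ← mul_assoc, trace, diag_apply,
    ← sum_sub_distrib]
  refine sum_congr rfl fun i _ => ?_
  rw [← add_sum_erase _ _ (mem_univ i), hdiag, add_sub_cancel_left]

theorem norm_star_dotProduct_mulVec_sub_trace_le {R : Matrix ι ι 𝕜} {v : ι → 𝕜}
    (hv : ∀ i, ‖v i‖ = 1) : ‖star v ⬝ᵥ R *ᵥ v - R.trace‖ ≤ offDiagNormSum R := by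
  rw [star_dotProduct_mulVec_sub_trace hv]
  refine (norm_sum_le _ _).trans <| sum_le_sum fun i _ => (norm_sum_le _ _).trans ?_
  exact sum_le_sum fun j _ => by simp [hv i, hv j]

theorem re_star_dotProduct_mulVec_le {R : Matrix ι ι 𝕜} {v : ι → 𝕜} (hv : ∀ i, ‖v i‖ = 1) :
    RCLike.re (star v ⬝ᵥ R *ᵥ v) ≤ RCLike.re R.trace + offDiagNormSum R := by
  have := (RCLike.abs_re_le_norm _).trans (norm_star_dotProduct_mulVec_sub_trace_le (R := R) hv)
  rw [map_sub] at this
  linarith [(abs_le.mp this).2]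

theorem re_trace_sub_le_re_star_dotProduct_mulVec {R : Matrix ι ι 𝕜} {v : ι → 𝕜}
    (hv : ∀ i, ‖v i‖ = 1) :
    RCLike.re R.trace - offDiagNormSum R ≤ RCLike.re (star v ⬝ᵥ R *ᵥ v) := by
  have := (RCLike.abs_re_le_norm _).trans (norm_star_dotProduct_mulVec_sub_trace_le (R := R) hv)
  rw [map_sub] at this
  linarith [(abs_le.mp this).1]

theorem mul_offDiagNormSum_le_re_trace {R : Matrix ι ι 𝕜} {c : ℝ}
    (hdom : ∀ i, c * ∑ j ∈ univ.erase i, ‖R i j‖ ≤ RCLike.re (R i i)) :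
    c * offDiagNormSum R ≤ RCLike.re R.trace := by
  rw [offDiagNormSum, mul_sum, trace, map_sum]
  exact sum_le_sum fun i _ => hdom i

end UnimodularQuadraticForm

theorem stmt_17_general (N : ℕ) (hN : 0 < N) (R : Matrix (Fin N) (Fin N) ℂ)
    (hdom : ∀ i, 2 * (N : ℝ) * ∑ j ∈ Finset.univ.erase i, ‖R i j‖ ≤ (R i i).re)
    (o : Fin N → ℂ) (ho : ∀ i, ‖o i‖ = 1)
    (s : Fin N → ℂ) (hs : ∀ i, ‖s i‖ = 1) :
    ((2 * (N : ℝ) - 1) / (2 * (N : ℝ) + 1)) * (star o ⬝ᵥ R *ᵥ o).re ≤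
      (star s ⬝ᵥ R *ᵥ s).re := by
  set T := R.trace.re
  set E := offDiagNormSum R
  have hupper : (star o ⬝ᵥ R *ᵥ o).re ≤ T + E := re_star_dotProduct_mulVec_le ho
  have hlower : T - E ≤ (star s ⬝ᵥ R *ᵥ s).re := re_trace_sub_le_re_star_dotProduct_mulVec hs
  have hET : 2 * (N : ℝ) * E ≤ T := mul_offDiagNormSum_le_re_trace hdom
  have hN1 : (1 : ℝ) ≤ N := by exact_mod_cast hN
  calc (2 * (N : ℝ) - 1) / (2 * N + 1) * (star o ⬝ᵥ R *ᵥ o).re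
      ≤ (2 * (N : ℝ) - 1) / (2 * N + 1) * (T + E) :=
        mul_le_mul_of_nonneg_left hupper (div_nonneg (by linarith) (by linarith))
    _ ≤ T - E := by
        rw [div_mul_eq_mul_div, div_le_iff₀ (by linarith)]
        linarith
    _ ≤ (star s ⬝ᵥ R *ᵥ s).re := hlower

/-- If `R` is `2N`-dominant, every unimodular `s` achieves at least a
`(2N−1)/(2N+1)` fraction of the optimal unimodular value. -/
theorem stmt_17 (N : ℕ) (hN : 0 < N) (R : Matrix (Fin N) (Fin N) ℂ) (hR : R.IsHermitian)
    (hdom : ∀ i, 2 * (N : ℝ) * ∑ j ∈ Finset.univ.erase i, ‖R i j‖ ≤ (R i i).re)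
    (o : Fin N → ℂ) (ho : ∀ i, ‖o i‖ = 1)
    (hopt : IsMaxOn (fun s : Fin N → ℂ => (star s ⬝ᵥ R *ᵥ s).re)
      {s : Fin N → ℂ | ∀ i, ‖s i‖ = 1} o)
    (s : Fin N → ℂ) (hs : ∀ i, ‖s i‖ = 1) :
    ((2 * (N : ℝ) - 1) / (2 * (N : ℝ) + 1)) * (star o ⬝ᵥ R *ᵥ o).re ≤
      (star s ⬝ᵥ R *ᵥ s).re :=
  stmt_17_general N hN R hdom o ho s hs
end
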